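/- For every positive integer n one has (4^n/√(πn))·(1 − 1/(8n)) < binom(2n, n) < 4^n/√(πn). -/
import Mathlib

open Real

namespace Stmt6Aux

open Filter Topology

noncomputable def Pc (n : ℕ) : ℝ := (Nat.choose (2*n) n : ℝ) / 4 ^ n

lemma Pc_pos (n : ℕ) : 0 < Pc n := by
  apply div_pos _ (by positivity)
  exact_mod_cast Nat.choose_pos (by omega)

lemma Pc_succ (n : ℕ) : Pc (n+1) = Pc n * ((2*(n:ℝ)+1) / (2*((n:ℝ)+1))) := by
  have h := Nat.succ_mul_centralBinom_succ n
  rw [Nat.centralBinom, Nat.centralBinom] at h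
  have h' : ((n:ℝ)+1) * (Nat.choose (2*(n+1)) (n+1) : ℝ)
      = 2*(2*(n:ℝ)+1) * (Nat.choose (2*n) n : ℝ) := by
    exact_mod_cast congrArg (Nat.cast : ℕ → ℝ) h
  unfold Pc
  have hn1 : ((n:ℝ)+1) ≠ 0 := by positivity
  have h4 : ((4:ℝ)^n) ≠ 0 := by positivity
  push_cast
  field_simp
  linear_combination (2*(4:ℝ)^n) * h'

noncomputable def u (n : ℕ) : ℝ := π * n * Pc n ^ 2

lemma u_pos (n : ℕ) (hn : 1 ≤ n) : 0 < u n := by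
  have : (0:ℝ) < n := by exact_mod_cast hn
  have := Pc_pos n
  unfold u
  positivity

lemma sqrtP (n : ℕ) (hn : 1 ≤ n) :
    Real.sqrt n * Pc n = Stirling.stirlingSeq (2*n) / (Stirling.stirlingSeq n)^2 := by
  have hn0 : (0:ℝ) < n := by exact_mod_cast hn
  have hfac : (0:ℝ) < (Nat.factorial n : ℝ) := by exact_mod_cast Nat.factorial_pos n
  have h2n : 2*n - n = n := by omega
  have hchoose : (Nat.choose (2*n) n : ℝ) * (Nat.factorial n : ℝ) * (Nat.factorial n : ℝ)
      = (Nat.factorial (2*n) : ℝ) := by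
    have := Nat.choose_mul_factorial_mul_factorial (show n ≤ 2*n by omega)
    rw [h2n] at this
    exact_mod_cast this
  set X := ((n:ℝ)/Real.exp 1)^n with hX
  have hXpos : 0 < X := by positivity
  have hsqn : 0 < Real.sqrt (n:ℝ) := Real.sqrt_pos.mpr hn0
  have hs2n : Stirling.stirlingSeq (2*n)
      = (Nat.factorial (2*n) : ℝ) / (2*Real.sqrt n * (4^n * X^2)) := by
    rw [Stirling.stirlingSeq]
    congr 1
    have h4 : Real.sqrt (2 * ((2*n : ℕ):ℝ)) = 2 * Real.sqrt n := by
      push_cast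
      rw [show (2:ℝ)*(2*(n:ℝ)) = 2^2 * n by ring, Real.sqrt_mul (by positivity),
        Real.sqrt_sq (by norm_num)]
    have hpow : (((2*n : ℕ):ℝ)/Real.exp 1)^(2*n) = 4^n * X^2 := by
      push_cast
      rw [show (2*(n:ℝ))/Real.exp 1 = 2 * ((n:ℝ)/Real.exp 1) by ring, mul_pow]
      rw [show 2*n = n*2 by ring, pow_mul ((n:ℝ)/Real.exp 1) n 2]
      rw [show ((2:ℝ)^(n*2)) = 4^n by rw [mul_comm, pow_mul]; norm_num]
    rw [h4, hpow]
  have hsn2 : (Stirling.stirlingSeq n)^2 = (Nat.factorial n : ℝ)^2 / (2*n * X^2) := by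
    rw [Stirling.stirlingSeq, div_pow, mul_pow, Real.sq_sqrt (by positivity : (0:ℝ) ≤ 2*(n:ℝ))]
  rw [Pc, hs2n, hsn2, ← hchoose]
  have hss : Real.sqrt (n:ℝ) * Real.sqrt (n:ℝ) = (n:ℝ) := Real.mul_self_sqrt hn0.le
  field_simp
  ring_nf
  rw [Real.sq_sqrt hn0.le]
  ring

lemma tendsto_sqrtP :
    Tendsto (fun n : ℕ => Real.sqrt n * Pc n) atTop (𝓝 (Real.sqrt π / π)) := by
  have h1 : Tendsto (fun n : ℕ => Stirling.stirlingSeq (2*n)) atTop (𝓝 (Real.sqrt π)) :=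
    Stirling.tendsto_stirlingSeq_sqrt_pi.comp
      (tendsto_atTop_mono (fun n => by change n ≤ 2*n; omega) tendsto_id)
  have h2 : Tendsto (fun n : ℕ => (Stirling.stirlingSeq n)^2) atTop (𝓝 ((Real.sqrt π)^2)) :=
    Stirling.tendsto_stirlingSeq_sqrt_pi.pow 2
  have hne : ((Real.sqrt π)^2) ≠ 0 := by
    rw [Real.sq_sqrt pi_pos.le]; exact pi_ne_zero
  have h3 := h1.div h2 hne
  rw [Real.sq_sqrt pi_pos.le] at h3
  apply h3.congr'
  filter_upwards [eventually_ge_atTop 1] with n hn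
  exact (sqrtP n hn).symm

lemma tendsto_u : Tendsto u atTop (𝓝 1) := by
  have h := (tendsto_sqrtP.mul tendsto_sqrtP).const_mul π
  have he : π * (Real.sqrt π / π * (Real.sqrt π / π)) = 1 := by
    rw [div_mul_div_comm, Real.mul_self_sqrt pi_pos.le]
    field_simp
  rw [he] at h
  apply h.congr
  intro n
  have hss : Real.sqrt (n:ℝ) * Real.sqrt (n:ℝ) = (n:ℝ) := Real.mul_self_sqrt (by positivity)
  unfold u
  linear_combination π * Pc n ^ 2 * hss

lemma u_succ (n : ℕ) (hn : 1 ≤ n) :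
    u (n+1) = u n * ((2*(n:ℝ)+1)^2 / (4*(n:ℝ)*((n:ℝ)+1))) := by
  have hn0 : (0:ℝ) < n := by exact_mod_cast hn
  unfold u
  rw [Pc_succ]
  push_cast
  field_simp
  ring

lemma u_lt_succ (n : ℕ) (hn : 1 ≤ n) : u n < u (n+1) := by
  have hn0 : (0:ℝ) < n := by exact_mod_cast hn
  rw [u_succ n hn]
  have hu := u_pos n hn
  have hr : 1 < (2*(n:ℝ)+1)^2 / (4*(n:ℝ)*((n:ℝ)+1)) := by
    rw [lt_div_iff₀ (by positivity)]
    nlinarith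
  nlinarith

lemma u_mono {a b : ℕ} (ha : 1 ≤ a) (hab : a ≤ b) : u a ≤ u b := by
  induction b, hab using Nat.le_induction with
  | base => exact le_refl _
  | succ m hm ih => exact le_trans ih (u_lt_succ m (le_trans ha hm)).le

lemma u_le_one (m : ℕ) (hm : 1 ≤ m) : u m ≤ 1 := by
  refine ge_of_tendsto tendsto_u ?_
  filter_upwards [eventually_ge_atTop m] with n hn
  exact u_mono hm hn

lemma u_lt_one (m : ℕ) (hm : 1 ≤ m) : u m < 1 :=
  lt_of_lt_of_le (u_lt_succ m hm) (u_le_one (m+1) (by omega))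

noncomputable def z (n : ℕ) : ℝ := u n / (1 - 1/(8*(n:ℝ)))^2

lemma d_pos (n : ℕ) (hn : 1 ≤ n) : 0 < 1 - 1/(8*(n:ℝ)) := by
  have hn0 : (1:ℝ) ≤ n := by exact_mod_cast hn
  have : 1/(8*(n:ℝ)) ≤ 1/8 := by
    apply div_le_div_of_nonneg_left (by norm_num) (by norm_num)
    linarith
  linarith

lemma z_succ_lt (n : ℕ) (hn : 1 ≤ n) : z (n+1) < z n := by
  have hr : (1:ℝ) ≤ n := by exact_mod_cast hn
  set r : ℝ := (n:ℝ) with hrdef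
  have hr0 : 0 < r := by linarith
  have hd1 : 0 < 1 - 1/(8*r) := d_pos n hn
  have hd2 : 0 < 1 - 1/(8*(r+1)) := by
    have h16 : (0:ℝ) < 8*(r+1) := by linarith
    have : 1/(8*(r+1)) < 1 := by rw [div_lt_one h16]; linarith
    linarith
  have hu := u_pos n hn
  unfold z
  rw [u_succ n hn]
  push_cast
  rw [div_lt_div_iff₀ (by positivity) (by positivity)]
  have key : (2*r+1)^2 / (4*r*(r+1)) * (1 - 1/(8*r))^2 < (1 - 1/(8*(r+1)))^2 := by
    have e1 : (1:ℝ) - 1/(8*r) = (8*r-1)/(8*r) := by field_simp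
    have e2 : (1:ℝ) - 1/(8*(r+1)) = (8*r+7)/(8*(r+1)) := by field_simp; ring
    rw [e1, e2, div_pow, div_pow, div_mul_div_comm, div_lt_div_iff₀ (by positivity) (by positivity)]
    have hfac : (0:ℝ) < 64*(r+1)*(8*r^2+11*r-1) := by nlinarith
    nlinarith [hfac]
  nlinarith [mul_lt_mul_of_pos_left key hu]

lemma z_anti {a b : ℕ} (ha : 1 ≤ a) (hab : a ≤ b) : z b ≤ z a := by
  induction b, hab using Nat.le_induction with
  | base => exact le_refl _
  | succ m hm ih => exact le_trans (z_succ_lt m (le_trans ha hm)).le ih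

lemma tendsto_z : Tendsto z atTop (𝓝 1) := by
  have h8 : Tendsto (fun n : ℕ => 8*(n:ℝ)) atTop atTop :=
    Tendsto.const_mul_atTop (by norm_num) tendsto_natCast_atTop_atTop
  have h0 : Tendsto (fun n : ℕ => 1/(8*(n:ℝ))) atTop (𝓝 0) :=
    h8.inv_tendsto_atTop.congr (fun n => (one_div _).symm)
  have hd : Tendsto (fun n : ℕ => (1 - 1/(8*(n:ℝ)))^2) atTop (𝓝 (((1:ℝ)-0)^2)) :=
    (tendsto_const_nhds.sub h0).pow 2
  rw [show ((1:ℝ)-0)^2 = 1 by norm_num] at hd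
  have h := tendsto_u.div hd one_ne_zero
  rw [show (1:ℝ)/1 = 1 by norm_num] at h
  exact h

lemma one_le_z (m : ℕ) (hm : 1 ≤ m) : 1 ≤ z m := by
  refine le_of_tendsto tendsto_z ?_
  filter_upwards [eventually_ge_atTop m] with n hn
  exact z_anti hm hn

lemma one_lt_z (m : ℕ) (hm : 1 ≤ m) : 1 < z m :=
  lt_of_le_of_lt (one_le_z (m+1) (by omega)) (z_succ_lt m hm)

lemma d_lt_u (m : ℕ) (hm : 1 ≤ m) : (1 - 1/(8*(m:ℝ)))^2 < u m := by
  have hd := d_pos m hm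
  have h := one_lt_z m hm
  unfold z at h
  rw [lt_div_iff₀ (by positivity)] at h
  linarith

end Stmt6Aux

open Stmt6Aux in
theorem stmt6 :
    ∀ n : ℕ, 0 < n →
      (4:ℝ) ^ n / Real.sqrt (π * n) * (1 - 1 / (8 * (n:ℝ))) < (Nat.choose (2 * n) n : ℝ) ∧
      (Nat.choose (2 * n) n : ℝ) < 4 ^ n / Real.sqrt (π * n) := by
  intro n hn
  have hn1 : (1:ℝ) ≤ n := by exact_mod_cast hn
  have hs : 0 < Real.sqrt (π * n) := Real.sqrt_pos.mpr (by positivity)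
  have hs2 : Real.sqrt (π * n) ^ 2 = π * n := Real.sq_sqrt (by positivity)
  have hP := Pc_pos n
  have hC : (Nat.choose (2*n) n : ℝ) = Pc n * 4^n := by
    unfold Pc; field_simp
  have h4 : (0:ℝ) < 4^n := by positivity
  have hd := d_pos n hn
  -- upper bound
  have hu1 : (Real.sqrt (π * n) * Pc n)^2 < 1 := by
    have := u_lt_one n hn
    unfold u at this
    rw [mul_pow, hs2]
    linarith
  have hup : Real.sqrt (π * n) * Pc n < 1 := by
    nlinarith [mul_pos hs hP]
  -- lower bound
  have hl1 : (1 - 1/(8*(n:ℝ)))^2 < (Real.sqrt (π * n) * Pc n)^2 := by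
    have := d_lt_u n hn
    unfold u at this
    rw [mul_pow, hs2]
    linarith
  have hlo : 1 - 1/(8*(n:ℝ)) < Real.sqrt (π * n) * Pc n := by
    nlinarith [mul_pos hs hP]
  constructor
  · rw [hC, div_mul_eq_mul_div, div_lt_iff₀ hs]
    nlinarith
  · rw [hC, lt_div_iff₀ hs]
    nlinarith
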